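/- arXiv:2004.14408 — 4 statements merged into one kernel-verified Lean document; each statement's English description precedes it below -/
import Mathlib

section
/- For every fixed y ∈ I_α^H, the function x ↦ κ_α^H(x,y) = k_α^H( (k_α^H)^{-1}(x) ∗ (k_α^H)^{-1}(y) ) is convex on I_α^H when 0 < α < 1 or 2 < α ≤ 3, and concave on I_α^H when 1 < α ≤ 2 or α ≥ 3 (and symmetrically in the second argument for fixed first argument). -/
open Real

noncomputable section

/-- Binary convolution `a∗b = a(1-b) + (1-a)b`. -/
def bconv (a b : ℝ) : ℝ := a * (1 - b) + (1 - a) * b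

/-- Binary Rényi entropy `h_α(p) = (1/(1-α))·log(p^α + (1-p)^α)`. -/
def binH (α p : ℝ) : ℝ := (1 / (1 - α)) * Real.log (p ^ α + (1 - p) ^ α)

/-- Inverse of `h_α` as a map `[0, log 2] → [0, 1/2]`. -/
def binHInv (α : ℝ) : ℝ → ℝ := Function.invFunOn (binH α) (Set.Icc 0 (1/2))

/-- `k_α^A(p) = (p^α + (1-p)^α)^{1/α}`. -/
def kA (α p : ℝ) : ℝ := (p ^ α + (1 - p) ^ α) ^ (1/α)

/-- Inverse of `k_α^A`, mapping `I_α^A` back to `[0,1/2]`. -/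
def kAInv (α : ℝ) : ℝ → ℝ := Function.invFunOn (kA α) (Set.Icc 0 (1/2))

/-- `δ_α^A = 2^{(1-α)/α}`. -/
def deltaA (α : ℝ) : ℝ := (2 : ℝ) ^ ((1 - α)/α)

/-- The closed interval `I_α^A` with endpoints `1` and `δ_α^A`. -/
def IA (α : ℝ) : Set ℝ := Set.uIcc 1 (deltaA α)

/-- `κ_α^A(x,y) = k_α^A((k_α^A)⁻¹(x) ∗ (k_α^A)⁻¹(y))`. -/
def kkA (α x y : ℝ) : ℝ := kA α (bconv (kAInv α x) (kAInv α y))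

/-- `k_α^H(p) = p^α + (1-p)^α`. -/
def kH (α p : ℝ) : ℝ := p ^ α + (1 - p) ^ α

/-- Inverse of `k_α^H`, mapping `I_α^H` back to `[0,1/2]`. -/
def kHInv (α : ℝ) : ℝ → ℝ := Function.invFunOn (kH α) (Set.Icc 0 (1/2))

/-- `δ_α^H = 2^{1-α}`. -/
def deltaH (α : ℝ) : ℝ := (2 : ℝ) ^ (1 - α)

/-- The closed interval `I_α^H` with endpoints `1` and `δ_α^H`. -/
def IH (α : ℝ) : Set ℝ := Set.uIcc 1 (deltaH α)

/-- `κ_α^H(x,y) = k_α^H((k_α^H)⁻¹(x) ∗ (k_α^H)⁻¹(y))`. -/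
def kkH (α x y : ℝ) : ℝ := kH α (bconv (kHInv α x) (kHInv α y))

/-- `ĥ_α(x,y) = h_α(h_α⁻¹(x) ∗ h_α⁻¹(y))`. -/
def hhat (α x y : ℝ) : ℝ := binH α (bconv (binHInv α x) (binHInv α y))

/-- Marginal on `Y` of a joint pmf. -/
def margY {X Y : Type*} [Fintype X] (p : X → Y → ℝ) (y : Y) : ℝ := ∑ x, p x y

/-- A joint pmf: nonnegative entries summing to one. -/
def IsPmf {X Y : Type*} [Fintype X] [Fintype Y] (p : X → Y → ℝ) : Prop :=
  (∀ x y, 0 ≤ p x y) ∧ ∑ x, ∑ y, p x y = 1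

/-- Arimoto conditional Rényi entropy `H_α^A(X|Y)`. -/
def condA (α : ℝ) {X Y : Type*} [Fintype X] [Fintype Y] (p : X → Y → ℝ) : ℝ :=
  (α / (1 - α)) * Real.log (∑ y, margY p y * (∑ x, (p x y / margY p y) ^ α) ^ (1/α))

/-- Hayashi conditional Rényi entropy `H_α^H(X|Y)`. -/
def condH (α : ℝ) {X Y : Type*} [Fintype X] [Fintype Y] (p : X → Y → ℝ) : ℝ :=
  (1 / (1 - α)) * Real.log (∑ y, ∑ x, margY p y * (p x y / margY p y) ^ α)

/-- Jizba–Arimitsu conditional Rényi entropy `H_α^J(X|Y)`. -/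
def condJ (α : ℝ) {X Y : Type*} [Fintype X] [Fintype Y] (p : X → Y → ℝ) : ℝ :=
  (1 / (1 - α)) * (Real.log (∑ x, ∑ y, p x y ^ α) - Real.log (∑ y, margY p y ^ α))

/-- Cachin conditional Rényi entropy `H_α^C(X|Y)`. -/
def condC (α : ℝ) {X Y : Type*} [Fintype X] [Fintype Y] (p : X → Y → ℝ) : ℝ :=
  (1 / (1 - α)) * ∑ y, margY p y * Real.log (∑ x, (p x y / margY p y) ^ α)

/-- `K_α^A(X|Y) = exp(((1-α)/α)·H_α^A(X|Y))`. -/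
def KA (α : ℝ) {X Y : Type*} [Fintype X] [Fintype Y] (p : X → Y → ℝ) : ℝ :=
  Real.exp (((1 - α)/α) * condA α p)

/-- `K_α^H(X|Y) = exp((1-α)·H_α^H(X|Y))`. -/
def KH (α : ℝ) {X Y : Type*} [Fintype X] [Fintype Y] (p : X → Y → ℝ) : ℝ :=
  Real.exp ((1 - α) * condH α p)

/-- `K_α^J(X|Y) = exp((1-α)·H_α^J(X|Y))`. -/
def KJ (α : ℝ) {X Y : Type*} [Fintype X] [Fintype Y] (p : X → Y → ℝ) : ℝ :=
  Real.exp ((1 - α) * condJ α p)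

/-- Joint pmf of `(X₁+X₂, (Y₁,Y₂))` for independent pairs `(X₁,Y₁)`, `(X₂,Y₂)`. -/
def combine {Y1 Y2 : Type*} (p1 : Bool → Y1 → ℝ) (p2 : Bool → Y2 → ℝ) :
    Bool → Y1 × Y2 → ℝ :=
  fun z y => ∑ x : Bool, p1 x y.1 * p2 (Bool.xor x z) y.2

/-- `k_∞^A(p) = max{p, 1-p}`. -/
def kInf (p : ℝ) : ℝ := max p (1 - p)

/-- Binary min-entropy `h_∞(p) = -log max{p, 1-p}`. -/
def binHInf (p : ℝ) : ℝ := - Real.log (max p (1 - p))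

/-- Inverse of the restriction of `h_∞` to `[0,1/2]`. -/
def binHInfInv : ℝ → ℝ := Function.invFunOn binHInf (Set.Icc 0 (1/2))

/-- Conditional min-entropy `H_∞(X|Y)` for binary `X`. -/
def condInf {Y : Type*} [Fintype Y] (p : Bool → Y → ℝ) : ℝ :=
  - Real.log (∑ y, margY p y * max (p false y / margY p y) (p true y / margY p y))

/-- Unconditional Rényi entropy of a finitely supported distribution. -/
def renyiEnt (α : ℝ) {X : Type*} [Fintype X] (p : X → ℝ) : ℝ :=
  (1 / (1 - α)) * Real.log (∑ x, p x ^ α)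

/-- Distribution of the mod-2 sum of two independent binary random variables. -/
def sumDist (p1 p2 : Bool → ℝ) : Bool → ℝ := fun z => ∑ x : Bool, p1 x * p2 (Bool.xor x z)

/-! With `b = (k_α^H)⁻¹(y)` and `p = (k_α^H)⁻¹(x)`, the derivative of `x ↦ κ_α^H(x, y)` is
`(1 - 2b) k'(p ∗ b) / k'(p)`. As `1 - 2 (p ∗ b) = (1 - 2p)(1 - 2b)`, its logarithmic derivative
in `p` is `(h(p ∗ b) - h(p)) / (1 - 2p)` with `h(p) = (1 - 2p) k''(p) / k'(p)`, and `p ∗ b ≥ p`.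
So convexity or concavity comes down to the monotonicity of `h` on `(0, 1/2)`, combined with that
of `(k_α^H)⁻¹` (increasing for `α < 1`, decreasing for `α > 1`). Substituting
`p = (1 - tanh s) / 2` turns `h` into `-(α - 1) - (α - 1) sinh ((3 - α) s) / sinh ((α - 1) s)`,
and `s ↦ a sinh (c s) / sinh (a s)` is increasing for `0 < a ≤ c` and decreasing for
`0 ≤ c ≤ a`, because `x ↦ x coth x` is increasing. Comparing `|α - 1|` with `|3 - α|` and
taking the sign of `3 - α` into account gives the four ranges. -/

open Set

lemma convexOn_sinh_Ici : ConvexOn ℝ (Ici 0) sinh := by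
  refine MonotoneOn.convexOn_of_deriv (convex_Ici 0) continuous_sinh.continuousOn
    differentiable_sinh.differentiableOn ?_
  rw [Real.deriv_sinh, interior_Ici]
  intro x hx y hy hxy
  rw [cosh_le_cosh, abs_of_pos hx, abs_of_pos hy]
  exact hxy

lemma sinh_mul_le_mul_sinh {c x : ℝ} (hc0 : 0 ≤ c) (hc1 : c ≤ 1) (hx : 0 ≤ x) :
    sinh (c * x) ≤ c * sinh x := by
  have h := convexOn_sinh_Ici.2 (mem_Ici.2 hx) (mem_Ici.2 le_rfl) hc0 (sub_nonneg.2 hc1)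
    (add_sub_cancel c 1)
  simpa using h

/-- `x ↦ x coth x` is monotone on `[0, ∞)`, in cross-multiplied form. -/
lemma mul_cosh_mul_sinh_le {x y : ℝ} (hx : 0 ≤ x) (hxy : x ≤ y) :
    x * cosh x * sinh y ≤ y * cosh y * sinh x := by
  rcases (add_nonneg hx (hx.trans hxy)).eq_or_lt with hxy0 | hpos
  · obtain rfl : x = 0 := by linarith
    obtain rfl : y = 0 := by linarith
    simp
  -- `sinh z / z` is monotone, applied to `y - x ≤ y + x`
  have h := sinh_mul_le_mul_sinh (div_nonneg (sub_nonneg.2 hxy) hpos.le)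
    ((div_le_one hpos).2 (by linarith)) hpos.le
  rw [div_mul_cancel₀ _ hpos.ne', div_mul_eq_mul_div, le_div_iff₀ hpos] at h
  nlinarith [sinh_add x y, sinh_sub y x]

def sinhRatio (a c s : ℝ) : ℝ := a * sinh (c * s) / sinh (a * s)

lemma sinhRatio_neg_left (a c : ℝ) : sinhRatio (-a) c = sinhRatio a c := by
  ext s
  simp only [sinhRatio, neg_mul, sinh_neg, neg_div_neg_eq]

lemma sinhRatio_neg_right (a c : ℝ) : sinhRatio a (-c) = -sinhRatio a c := by
  ext s
  simp only [sinhRatio, Pi.neg_apply, neg_mul, sinh_neg, mul_neg, neg_div]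

lemma hasDerivAt_sinhRatio {a c s : ℝ} (ha : a ≠ 0) (hs : s ≠ 0) :
    HasDerivAt (sinhRatio a c)
      (a * (c * cosh (c * s) * sinh (a * s) - a * cosh (a * s) * sinh (c * s))
        / sinh (a * s) ^ 2) s := by
  have hsinh : sinh (a * s) ≠ 0 := by simpa [sinh_eq_zero] using mul_ne_zero ha hs
  have hlin (k : ℝ) : HasDerivAt (fun x => k * x) k s := by
    simpa using (hasDerivAt_id s).const_mul k
  exact ((hlin c).sinh.const_mul a).div (hlin a).sinh hsinh |>.congr_deriv (by ring)

lemma sinhRatio_monotoneOn {a c : ℝ} (ha : 0 < a) (hac : a ≤ c) :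
    MonotoneOn (sinhRatio a c) (Ioi 0) := by
  refine monotoneOn_of_deriv_nonneg (convex_Ioi 0)
    (fun s hs => (hasDerivAt_sinhRatio ha.ne' (ne_of_gt hs)).continuousAt.continuousWithinAt)
    (fun s hs => (hasDerivAt_sinhRatio ha.ne' (ne_of_gt (interior_subset hs))).differentiableAt
      |>.differentiableWithinAt) ?_
  rw [interior_Ioi]
  intro s (hs : 0 < s)
  rw [(hasDerivAt_sinhRatio ha.ne' hs.ne').deriv]
  have h := mul_cosh_mul_sinh_le (mul_pos ha hs).le (mul_le_mul_of_nonneg_right hac hs.le)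
  have : 0 ≤ c * cosh (c * s) * sinh (a * s) - a * cosh (a * s) * sinh (c * s) := by
    nlinarith
  positivity

lemma sinhRatio_antitoneOn {a c : ℝ} (ha : 0 < a) (hc : 0 ≤ c) (hca : c ≤ a) :
    AntitoneOn (sinhRatio a c) (Ioi 0) := by
  refine antitoneOn_of_deriv_nonpos (convex_Ioi 0)
    (fun s hs => (hasDerivAt_sinhRatio ha.ne' (ne_of_gt hs)).continuousAt.continuousWithinAt)
    (fun s hs => (hasDerivAt_sinhRatio ha.ne' (ne_of_gt (interior_subset hs))).differentiableAt
      |>.differentiableWithinAt) ?_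
  rw [interior_Ioi]
  intro s (hs : 0 < s)
  rw [(hasDerivAt_sinhRatio ha.ne' hs.ne').deriv]
  have h := mul_cosh_mul_sinh_le (mul_nonneg hc hs.le) (mul_le_mul_of_nonneg_right hca hs.le)
  have : c * cosh (c * s) * sinh (a * s) - a * cosh (a * s) * sinh (c * s) ≤ 0 := by
    nlinarith
  exact div_nonpos_of_nonpos_of_nonneg (mul_nonpos_of_nonneg_of_nonpos ha.le this) (sq_nonneg _)

lemma IsCompact.continuousOn_invFunOn {X Y : Type*} [TopologicalSpace X] [TopologicalSpace Y]
    [T2Space Y] [Nonempty X] {f : X → Y} {s : Set X} (hs : IsCompact s) (hf : ContinuousOn f s)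
    (hinj : InjOn f s) : ContinuousOn (Function.invFunOn f s) (f '' s) := by
  refine continuousOn_iff_isClosed.2 fun C hC => ⟨f '' (s ∩ C), ?_, ?_⟩
  · exact ((hs.inter_right hC).image_of_continuousOn (hf.mono inter_subset_left)).isClosed
  · ext y
    simp only [mem_inter_iff, mem_preimage, mem_image]
    constructor
    · rintro ⟨hy, x, hx, rfl⟩
      exact ⟨⟨x, ⟨hx, hinj.leftInvOn_invFunOn hx ▸ hy⟩, rfl⟩, x, hx, rfl⟩
    · rintro ⟨⟨x, ⟨hx, hxC⟩, rfl⟩, -⟩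
      exact ⟨(hinj.leftInvOn_invFunOn hx).symm ▸ hxC, x, hx, rfl⟩

def kHDeriv (α p : ℝ) : ℝ := α * (p ^ (α - 1) - (1 - p) ^ (α - 1))

def kHDeriv2 (α p : ℝ) : ℝ := α * (α - 1) * (p ^ (α - 2) + (1 - p) ^ (α - 2))

lemma continuous_kH {α : ℝ} (hα : 0 < α) : Continuous (kH α) :=
  (continuous_rpow_const hα.le).add ((continuous_rpow_const hα.le).comp (continuous_sub_left 1))

lemma hasDerivAt_kH {α p : ℝ} (hp : p ∈ Ioo 0 1) : HasDerivAt (kH α) (kHDeriv α p) p := by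
  have h1 := (hasDerivAt_id p).const_sub 1 |>.rpow_const (p := α) (Or.inl (sub_ne_zero.2 hp.2.ne'))
  have h0 := hasDerivAt_rpow_const (x := p) (p := α) (Or.inl hp.1.ne')
  exact (h0.add h1).congr_deriv (by simp only [kHDeriv, id]; ring)

lemma hasDerivAt_kHDeriv {α p : ℝ} (hp : p ∈ Ioo 0 1) :
    HasDerivAt (kHDeriv α) (kHDeriv2 α p) p := by
  have h1 := (hasDerivAt_id p).const_sub 1 |>.rpow_const (p := α - 1)
    (Or.inl (sub_ne_zero.2 hp.2.ne'))
  have h0 := hasDerivAt_rpow_const (x := p) (p := α - 1) (Or.inl hp.1.ne')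
  exact ((h0.sub h1).const_mul α).congr_deriv (by simp only [kHDeriv2, id]; ring_nf)

lemma kHDeriv_pos {α p : ℝ} (hα : 0 < α) (hα1 : α < 1) (hp : p ∈ Ioo 0 (1 / 2)) :
    0 < kHDeriv α p :=
  mul_pos hα (sub_pos.2 (rpow_lt_rpow_of_neg hp.1 (by linarith [hp.2]) (by linarith)))

lemma kHDeriv_neg {α p : ℝ} (hα1 : 1 < α) (hp : p ∈ Ioo 0 (1 / 2)) : kHDeriv α p < 0 :=
  mul_neg_of_pos_of_neg (by linarith)
    (sub_neg.2 (rpow_lt_rpow hp.1.le (by linarith [hp.2]) (by linarith)))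

lemma kHDeriv_ne_zero {α p : ℝ} (hα : 0 < α) (hα1 : α ≠ 1) (hp : p ∈ Ioo 0 (1 / 2)) :
    kHDeriv α p ≠ 0 := by
  rcases hα1.lt_or_gt with h | h
  · exact (kHDeriv_pos hα h hp).ne'
  · exact (kHDeriv_neg h hp).ne

lemma strictMonoOn_kH {α : ℝ} (hα : 0 < α) (hα1 : α < 1) :
    StrictMonoOn (kH α) (Icc 0 (1 / 2)) := by
  refine strictMonoOn_of_deriv_pos (convex_Icc _ _) (continuous_kH hα).continuousOn ?_
  rw [interior_Icc]
  intro p hp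
  rw [(hasDerivAt_kH ⟨hp.1, by linarith [hp.2]⟩).deriv]
  exact kHDeriv_pos hα hα1 hp

lemma strictAntiOn_kH {α : ℝ} (hα1 : 1 < α) : StrictAntiOn (kH α) (Icc 0 (1 / 2)) := by
  refine strictAntiOn_of_deriv_neg (convex_Icc _ _) (continuous_kH (by linarith)).continuousOn ?_
  rw [interior_Icc]
  intro p hp
  rw [(hasDerivAt_kH ⟨hp.1, by linarith [hp.2]⟩).deriv]
  exact kHDeriv_neg hα1 hp

lemma kH_zero {α : ℝ} (hα : 0 < α) : kH α 0 = 1 := by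
  simp [kH, zero_rpow hα.ne']

lemma kH_one_half (α : ℝ) : kH α (1 / 2) = deltaH α := by
  rw [kH, deltaH, show (1 : ℝ) - 1 / 2 = 1 / 2 by norm_num, ← two_mul, one_div,
    inv_rpow zero_le_two, rpow_sub zero_lt_two, rpow_one, div_eq_mul_inv]

lemma bijOn_kH {α : ℝ} (hα : 0 < α) (hα1 : α ≠ 1) : BijOn (kH α) (Icc 0 (1 / 2)) (IH α) := by
  have h0 : (0 : ℝ) ∈ Icc 0 (1 / 2) := by norm_num
  have h2 : (1 / 2 : ℝ) ∈ Icc 0 (1 / 2) := by norm_num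
  refine ⟨?_, ?_, ?_⟩
  · rcases hα1.lt_or_gt with h | h
    · have hle : 1 ≤ deltaH α := by
        have := (strictMonoOn_kH hα h).monotoneOn h0 h2 (by norm_num)
        rwa [kH_zero hα, kH_one_half] at this
      have := (strictMonoOn_kH hα h).monotoneOn.mapsTo_Icc
      rwa [kH_zero hα, kH_one_half, ← uIcc_of_le hle] at this
    · have hle : deltaH α ≤ 1 := by
        have := (strictAntiOn_kH h).antitoneOn h0 h2 (by norm_num)
        rwa [kH_zero hα, kH_one_half] at this
      have := (strictAntiOn_kH h).antitoneOn.mapsTo_Icc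
      rwa [kH_zero hα, kH_one_half, ← uIcc_of_ge hle] at this
  · rcases hα1.lt_or_gt with h | h
    · exact (strictMonoOn_kH hα h).injOn
    · exact (strictAntiOn_kH h).injOn
  · have := intermediate_value_uIcc (a := 0) (b := 1 / 2) (continuous_kH hα).continuousOn
    rwa [kH_zero hα, kH_one_half, uIcc_of_le (show (0 : ℝ) ≤ 1 / 2 by norm_num)] at this

lemma kHInv_mem {α x : ℝ} (hα : 0 < α) (hα1 : α ≠ 1) (hx : x ∈ IH α) : kHInv α x ∈ Icc 0 (1 / 2) :=
  (bijOn_kH hα hα1).surjOn.mapsTo_invFunOn hx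

lemma kH_kHInv {α x : ℝ} (hα : 0 < α) (hα1 : α ≠ 1) (hx : x ∈ IH α) : kH α (kHInv α x) = x :=
  (bijOn_kH hα hα1).surjOn.rightInvOn_invFunOn hx

lemma continuousOn_kHInv {α : ℝ} (hα : 0 < α) (hα1 : α ≠ 1) : ContinuousOn (kHInv α) (IH α) := by
  rw [← (bijOn_kH hα hα1).image_eq]
  exact isCompact_Icc.continuousOn_invFunOn (continuous_kH hα).continuousOn
    (bijOn_kH hα hα1).injOn

lemma kHInv_mem_Ioo {α x : ℝ} (hα : 0 < α) (hα1 : α ≠ 1) (hx : x ∈ interior (IH α)) :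
    kHInv α x ∈ Ioo 0 (1 / 2) := by
  have hx' : x ∈ uIoo 1 (deltaH α) := by rwa [IH, uIcc, interior_Icc] at hx
  have hmem := kHInv_mem hα hα1 (interior_subset hx)
  refine ⟨hmem.1.lt_of_ne fun h => ?_, hmem.2.lt_of_ne fun h => ?_⟩
  · rw [← kH_kHInv hα hα1 (interior_subset hx), ← h, kH_zero hα] at hx'
    exact left_notMem_uIoo hx'
  · rw [← kH_kHInv hα hα1 (interior_subset hx), h, kH_one_half] at hx'
    exact right_notMem_uIoo hx'

lemma hasDerivAt_kHInv {α x : ℝ} (hα : 0 < α) (hα1 : α ≠ 1) (hx : x ∈ interior (IH α)) :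
    HasDerivAt (kHInv α) (kHDeriv α (kHInv α x))⁻¹ x := by
  have hp := kHInv_mem_Ioo hα hα1 hx
  refine HasDerivAt.of_local_left_inverse
    ((continuousOn_kHInv hα hα1).continuousAt (mem_interior_iff_mem_nhds.1 hx))
    (hasDerivAt_kH ⟨hp.1, by linarith [hp.2]⟩) (kHDeriv_ne_zero hα hα1 hp) ?_
  filter_upwards [isOpen_interior.mem_nhds hx] with y hy
  exact kH_kHInv hα hα1 (interior_subset hy)

lemma monotoneOn_kHInv {α : ℝ} (hα : 0 < α) (hα1 : α < 1) : MonotoneOn (kHInv α) (IH α) := by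
  intro x hx y hy hxy
  rwa [← (strictMonoOn_kH hα hα1).le_iff_le (kHInv_mem hα hα1.ne hx) (kHInv_mem hα hα1.ne hy),
    kH_kHInv hα hα1.ne hx, kH_kHInv hα hα1.ne hy]

lemma antitoneOn_kHInv {α : ℝ} (hα1 : 1 < α) : AntitoneOn (kHInv α) (IH α) := by
  have hα : 0 < α := by linarith
  intro x hx y hy hxy
  rwa [← (strictAntiOn_kH hα1).le_iff_ge (kHInv_mem hα hα1.ne' hx) (kHInv_mem hα hα1.ne' hy),
    kH_kHInv hα hα1.ne' hx, kH_kHInv hα hα1.ne' hy]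

lemma one_sub_tanh_div_two (s : ℝ) : (1 - tanh s) / 2 = exp (-s) / (2 * cosh s) := by
  rw [tanh_eq_sinh_div_cosh, sinh_eq, cosh_eq]
  field_simp
  ring

lemma one_sub_one_sub_tanh_div_two (s : ℝ) : 1 - (1 - tanh s) / 2 = exp s / (2 * cosh s) := by
  rw [tanh_eq_sinh_div_cosh, sinh_eq, cosh_eq]
  field_simp
  ring

lemma exp_div_rpow {C : ℝ} (hC : 0 ≤ C) (t c : ℝ) : (exp t / C) ^ c = exp (c * t) / C ^ c := by
  rw [div_rpow (exp_pos t).le hC, ← exp_mul, mul_comm]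

lemma kHDeriv_one_sub_tanh_div_two (α s : ℝ) :
    kHDeriv α ((1 - tanh s) / 2) = -2 * α * sinh ((α - 1) * s) / (2 * cosh s) ^ (α - 1) := by
  rw [kHDeriv, one_sub_one_sub_tanh_div_two, one_sub_tanh_div_two, exp_div_rpow (by positivity),
    exp_div_rpow (by positivity), sinh_eq ((α - 1) * s), mul_neg]
  ring

lemma kHDeriv2_one_sub_tanh_div_two (α s : ℝ) :
    kHDeriv2 α ((1 - tanh s) / 2)
      = 2 * α * (α - 1) * cosh ((α - 2) * s) / (2 * cosh s) ^ (α - 2) := by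
  rw [kHDeriv2, one_sub_one_sub_tanh_div_two, one_sub_tanh_div_two, exp_div_rpow (by positivity),
    exp_div_rpow (by positivity), cosh_eq ((α - 2) * s), mul_neg]
  ring

def kHRatio (α p : ℝ) : ℝ := (1 - 2 * p) * kHDeriv2 α p / kHDeriv α p

lemma kHRatio_one_sub_tanh_div_two {α s : ℝ} (hα0 : α ≠ 0) (hα1 : α ≠ 1) (hs : s ≠ 0) :
    kHRatio α ((1 - tanh s) / 2) = -(α - 1) - sinhRatio (α - 1) (3 - α) s := by
  have hC : 0 < 2 * cosh s := by positivity
  have hsinh : sinh ((α - 1) * s) ≠ 0 := by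
    simpa [sinh_eq_zero] using mul_ne_zero (sub_ne_zero.2 hα1) hs
  have hpow : (2 * cosh s) ^ (α - 1) = (2 * cosh s) ^ (α - 2) * (2 * cosh s) := by
    rw [← rpow_add_one hC.ne']
    ring_nf
  have hprod : 2 * sinh s * cosh ((α - 2) * s) = sinh ((α - 1) * s) + sinh ((3 - α) * s) := by
    rw [show (α - 1) * s = s + (α - 2) * s by ring, show (3 - α) * s = s - (α - 2) * s by ring,
      sinh_add, sinh_sub]
    ring
  have hpos := rpow_pos_of_pos hC (α - 2)
  rw [kHRatio, kHDeriv_one_sub_tanh_div_two, kHDeriv2_one_sub_tanh_div_two, sinhRatio, hpow,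
    tanh_eq_sinh_div_cosh]
  field_simp
  rw [mul_comm s]
  linear_combination -hprod

lemma kHRatio_eq_sinhRatio_artanh {α p : ℝ} (hα0 : α ≠ 0) (hα1 : α ≠ 1)
    (hp : p ∈ Ioo 0 (1 / 2)) :
    kHRatio α p = -(α - 1) - sinhRatio (α - 1) (3 - α) (artanh (1 - 2 * p)) := by
  have h : 1 - 2 * p ∈ Ioo 0 1 := ⟨by linarith [hp.2], by linarith [hp.1]⟩
  have hp' : p = (1 - tanh (artanh (1 - 2 * p))) / 2 := by
    rw [tanh_artanh ⟨by linarith [h.1], h.2⟩]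
    ring
  conv_lhs => rw [hp']
  exact kHRatio_one_sub_tanh_div_two hα0 hα1 (artanh_pos h).ne'

lemma antitoneOn_artanh_one_sub_two_mul :
    AntitoneOn (fun p => artanh (1 - 2 * p)) (Ioo 0 (1 / 2)) :=
  fun _ hp _ hq hpq => artanh_le_artanh (by linarith [hq.2]) (by linarith [hp.1]) (by linarith)

lemma mapsTo_artanh_one_sub_two_mul :
    MapsTo (fun p => artanh (1 - 2 * p)) (Ioo 0 (1 / 2)) (Ioi 0) :=
  fun _ hp => artanh_pos ⟨by linarith [hp.2], by linarith [hp.1]⟩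

lemma kHRatio_monotoneOn {α : ℝ} (hα : 0 < α) (h : α < 1 ∨ (1 < α ∧ α ≤ 2) ∨ 3 ≤ α) :
    MonotoneOn (kHRatio α) (Ioo 0 (1 / 2)) := by
  have hα1 : α ≠ 1 := by rcases h with h | h | h <;> [exact h.ne; exact h.1.ne'; linarith]
  have hmono : MonotoneOn (sinhRatio (α - 1) (3 - α)) (Ioi 0) := by
    rcases h with h | ⟨h1, h2⟩ | h3
    · rw [← sinhRatio_neg_left, neg_sub]
      exact sinhRatio_monotoneOn (by linarith) (by linarith)
    · exact sinhRatio_monotoneOn (by linarith) (by linarith)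
    · rw [show 3 - α = -(α - 3) by ring, sinhRatio_neg_right]
      exact fun s hs t ht hst =>
        neg_le_neg (sinhRatio_antitoneOn (by linarith) (by linarith) (by linarith) hs ht hst)
  intro p hp q hq hpq
  rw [kHRatio_eq_sinhRatio_artanh hα.ne' hα1 hp, kHRatio_eq_sinhRatio_artanh hα.ne' hα1 hq]
  have h := hmono.comp_AntitoneOn antitoneOn_artanh_one_sub_two_mul
    mapsTo_artanh_one_sub_two_mul hp hq hpq
  simp only [Function.comp_apply] at h
  linarith

lemma kHRatio_antitoneOn {α : ℝ} (h2 : 2 ≤ α) (h3 : α ≤ 3) :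
    AntitoneOn (kHRatio α) (Ioo 0 (1 / 2)) := by
  have hanti := sinhRatio_antitoneOn (a := α - 1) (c := 3 - α) (by linarith) (by linarith)
    (by linarith)
  intro p hp q hq hpq
  rw [kHRatio_eq_sinhRatio_artanh (by linarith) (by linarith) hp,
    kHRatio_eq_sinhRatio_artanh (by linarith) (by linarith) hq]
  have h := hanti.comp antitoneOn_artanh_one_sub_two_mul mapsTo_artanh_one_sub_two_mul hp hq hpq
  simp only [Function.comp_apply] at h
  linarith

lemma bconv_comm (a b : ℝ) : bconv a b = bconv b a := by
  unfold bconv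
  ring

lemma hasDerivAt_bconv_left (b p : ℝ) : HasDerivAt (fun p => bconv p b) (1 - 2 * b) p := by
  have h : (fun p => bconv p b) = fun p => (1 - 2 * b) * p + b := by
    ext p
    simp only [bconv]
    ring
  rw [h]
  simpa using ((hasDerivAt_id p).const_mul (1 - 2 * b)).add_const b

lemma bconv_mem_Ioo {p b : ℝ} (hp : p ∈ Ioo 0 (1 / 2)) (hb : b ∈ Ico 0 (1 / 2)) :
    bconv p b ∈ Ioo 0 (1 / 2) := by
  obtain ⟨hp0, hp2⟩ := hp
  obtain ⟨hb0, hb2⟩ := hb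
  constructor <;> simp only [bconv] <;> nlinarith

lemma le_bconv {p b : ℝ} (hp : p ≤ 1 / 2) (hb : 0 ≤ b) : p ≤ bconv p b := by
  simp only [bconv]
  nlinarith

def kkHSlope (α b p : ℝ) : ℝ := (1 - 2 * b) * kHDeriv α (bconv p b) / kHDeriv α p

lemma kkHSlope_pos {α b p : ℝ} (hα : 0 < α) (hα1 : α ≠ 1) (hp : p ∈ Ioo 0 (1 / 2))
    (hb : b ∈ Ico 0 (1 / 2)) : 0 < kkHSlope α b p := by
  have hq := bconv_mem_Ioo hp hb
  rw [kkHSlope, mul_div_assoc]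
  refine mul_pos (by linarith [hb.2]) ?_
  rcases hα1.lt_or_gt with h | h
  · exact div_pos (kHDeriv_pos hα h hq) (kHDeriv_pos hα h hp)
  · exact div_pos_of_neg_of_neg (kHDeriv_neg h hq) (kHDeriv_neg h hp)

lemma hasDerivAt_kkHSlope {α b p : ℝ} (hα : 0 < α) (hα1 : α ≠ 1) (hp : p ∈ Ioo 0 (1 / 2))
    (hb : b ∈ Ico 0 (1 / 2)) :
    HasDerivAt (kkHSlope α b)
      (kkHSlope α b p * (kHRatio α (bconv p b) - kHRatio α p) / (1 - 2 * p)) p := by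
  have hq := bconv_mem_Ioo hp hb
  have hnum := ((hasDerivAt_kHDeriv (α := α) ⟨hq.1, by linarith [hq.2]⟩).comp p
    (hasDerivAt_bconv_left b p)).const_mul (1 - 2 * b)
  have hden := hasDerivAt_kHDeriv (α := α) ⟨hp.1, by linarith [hp.2]⟩
  refine (hnum.div hden (kHDeriv_ne_zero hα hα1 hp)).congr_deriv ?_
  have hkp := kHDeriv_ne_zero hα hα1 hp
  have hkq := kHDeriv_ne_zero hα hα1 hq
  have hp2 : 1 - 2 * p ≠ 0 := by linarith [hp.2]
  simp only [kkHSlope, kHRatio] at hkq ⊢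
  field_simp
  simp only [bconv, Function.comp_apply]
  ring

lemma kkHSlope_one_half (α : ℝ) : kkHSlope α (1 / 2) = fun _ => 0 := by
  ext p
  simp [kkHSlope]

lemma kkHSlope_monotoneOn {α b : ℝ} (hα : 0 < α) (hα1 : α ≠ 1)
    (hh : MonotoneOn (kHRatio α) (Ioo 0 (1 / 2))) (hb : b ∈ Icc 0 (1 / 2)) :
    MonotoneOn (kkHSlope α b) (Ioo 0 (1 / 2)) := by
  rcases hb.2.eq_or_lt with rfl | hb2
  · rw [kkHSlope_one_half]
    exact monotoneOn_const
  have hb' : b ∈ Ico 0 (1 / 2) := ⟨hb.1, hb2⟩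
  have hd (p : ℝ) (hp : p ∈ Ioo 0 (1 / 2)) := hasDerivAt_kkHSlope hα hα1 hp hb'
  refine monotoneOn_of_deriv_nonneg (convex_Ioo _ _)
    (fun p hp => (hd p hp).continuousAt.continuousWithinAt) ?_ ?_ <;> rw [interior_Ioo]
  · exact fun p hp => (hd p hp).differentiableAt.differentiableWithinAt
  · intro p hp
    rw [(hd p hp).deriv]
    have hpq := hh hp (bconv_mem_Ioo hp hb') (le_bconv hp.2.le hb.1)
    exact div_nonneg (mul_nonneg (kkHSlope_pos hα hα1 hp hb').le (sub_nonneg.2 hpq))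
      (by linarith [hp.2])

lemma kkHSlope_antitoneOn {α b : ℝ} (hα : 0 < α) (hα1 : α ≠ 1)
    (hh : AntitoneOn (kHRatio α) (Ioo 0 (1 / 2))) (hb : b ∈ Icc 0 (1 / 2)) :
    AntitoneOn (kkHSlope α b) (Ioo 0 (1 / 2)) := by
  rcases hb.2.eq_or_lt with rfl | hb2
  · rw [kkHSlope_one_half]
    exact antitoneOn_const
  have hb' : b ∈ Ico 0 (1 / 2) := ⟨hb.1, hb2⟩
  have hd (p : ℝ) (hp : p ∈ Ioo 0 (1 / 2)) := hasDerivAt_kkHSlope hα hα1 hp hb'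
  refine antitoneOn_of_deriv_nonpos (convex_Ioo _ _)
    (fun p hp => (hd p hp).continuousAt.continuousWithinAt) ?_ ?_ <;> rw [interior_Ioo]
  · exact fun p hp => (hd p hp).differentiableAt.differentiableWithinAt
  · intro p hp
    rw [(hd p hp).deriv]
    have hpq := hh hp (bconv_mem_Ioo hp hb') (le_bconv hp.2.le hb.1)
    exact div_nonpos_of_nonpos_of_nonneg
      (mul_nonpos_of_nonneg_of_nonpos (kkHSlope_pos hα hα1 hp hb').le (sub_nonpos.2 hpq))
      (by linarith [hp.2])

lemma hasDerivAt_kkH_left {α x y : ℝ} (hα : 0 < α) (hα1 : α ≠ 1) (hy : y ∈ IH α)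
    (hx : x ∈ interior (IH α)) :
    HasDerivAt (fun x => kkH α x y) (kkHSlope α (kHInv α y) (kHInv α x)) x := by
  have hp := kHInv_mem_Ioo hα hα1 hx
  have hb := kHInv_mem hα hα1 hy
  have hq : bconv (kHInv α x) (kHInv α y) ∈ Ioo 0 1 := by
    obtain ⟨hp0, hp2⟩ := hp
    obtain ⟨hb0, hb2⟩ := hb
    constructor <;> simp only [bconv] <;> nlinarith
  have hbconv := hasDerivAt_bconv_left (kHInv α y) (kHInv α x)
  refine (((hasDerivAt_kH (α := α) hq).comp (kHInv α x) hbconv).comp x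
    (hasDerivAt_kHInv hα hα1 hx)).congr_deriv ?_
  rw [kkHSlope]
  ring

lemma continuousOn_kkH_left {α y : ℝ} (hα : 0 < α) (hα1 : α ≠ 1) :
    ContinuousOn (fun x => kkH α x y) (IH α) := by
  have h := continuousOn_kHInv hα hα1
  exact (continuous_kH hα).comp_continuousOn
    ((h.mul continuousOn_const).add ((continuousOn_const.sub h).mul continuousOn_const))

lemma convexOn_kkH_left_of_monotoneOn {α y : ℝ} (hα : 0 < α) (hα1 : α ≠ 1) (hy : y ∈ IH α)
    (h : MonotoneOn (fun x => kkHSlope α (kHInv α y) (kHInv α x)) (interior (IH α))) :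
    ConvexOn ℝ (IH α) (fun x => kkH α x y) :=
  (h.congr fun _ hx => (hasDerivAt_kkH_left hα hα1 hy hx).deriv.symm).convexOn_of_deriv
    (convex_uIcc _ _) (continuousOn_kkH_left hα hα1)
    fun _ hx => (hasDerivAt_kkH_left hα hα1 hy hx).differentiableAt.differentiableWithinAt

lemma concaveOn_kkH_left_of_antitoneOn {α y : ℝ} (hα : 0 < α) (hα1 : α ≠ 1) (hy : y ∈ IH α)
    (h : AntitoneOn (fun x => kkHSlope α (kHInv α y) (kHInv α x)) (interior (IH α))) :
    ConcaveOn ℝ (IH α) (fun x => kkH α x y) :=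
  (h.congr fun _ hx => (hasDerivAt_kkH_left hα hα1 hy hx).deriv.symm).concaveOn_of_deriv
    (convex_uIcc _ _) (continuousOn_kkH_left hα hα1)
    fun _ hx => (hasDerivAt_kkH_left hα hα1 hy hx).differentiableAt.differentiableWithinAt

lemma convexOn_kkH_left {α y : ℝ} (h : (0 < α ∧ α < 1) ∨ (2 < α ∧ α ≤ 3)) (hy : y ∈ IH α) :
    ConvexOn ℝ (IH α) (fun x => kkH α x y) := by
  rcases h with ⟨hα, hα1⟩ | ⟨hα2, hα3⟩
  · have hslope := kkHSlope_monotoneOn hα hα1.ne (kHRatio_monotoneOn hα (Or.inl hα1))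
      (kHInv_mem hα hα1.ne hy)
    exact convexOn_kkH_left_of_monotoneOn hα hα1.ne hy <| hslope.comp
      ((monotoneOn_kHInv hα hα1).mono interior_subset) fun _ => kHInv_mem_Ioo hα hα1.ne
  · have hα : 0 < α := by linarith
    have hα1 : α ≠ 1 := by linarith
    have hslope := kkHSlope_antitoneOn hα hα1 (kHRatio_antitoneOn hα2.le hα3)
      (kHInv_mem hα hα1 hy)
    exact convexOn_kkH_left_of_monotoneOn hα hα1 hy <| hslope.comp
      ((antitoneOn_kHInv (by linarith)).mono interior_subset) fun _ => kHInv_mem_Ioo hα hα1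

lemma concaveOn_kkH_left {α y : ℝ} (h : (1 < α ∧ α ≤ 2) ∨ 3 ≤ α) (hy : y ∈ IH α) :
    ConcaveOn ℝ (IH α) (fun x => kkH α x y) := by
  have hα1 : 1 < α := by rcases h with ⟨h, -⟩ | h <;> linarith
  have hα : 0 < α := by linarith
  have hslope := kkHSlope_monotoneOn hα hα1.ne' (kHRatio_monotoneOn hα (Or.inr h))
    (kHInv_mem hα hα1.ne' hy)
  exact concaveOn_kkH_left_of_antitoneOn hα hα1.ne' hy <| hslope.comp_AntitoneOn
    ((antitoneOn_kHInv hα1).mono interior_subset) fun _ => kHInv_mem_Ioo hα hα1.ne'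

lemma kkH_comm (α x y : ℝ) : kkH α x y = kkH α y x := by
  rw [kkH, kkH, bconv_comm]

/-- Convexity/concavity ranges for `κ_α^H`. -/
theorem stmt_8 (α : ℝ) :
    (((0 < α ∧ α < 1) ∨ (2 < α ∧ α ≤ 3)) →
      (∀ y ∈ IH α, ConvexOn ℝ (IH α) (fun x => kkH α x y)) ∧
      (∀ x ∈ IH α, ConvexOn ℝ (IH α) (fun y => kkH α x y))) ∧
    (((1 < α ∧ α ≤ 2) ∨ 3 ≤ α) →
      (∀ y ∈ IH α, ConcaveOn ℝ (IH α) (fun x => kkH α x y)) ∧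
      (∀ x ∈ IH α, ConcaveOn ℝ (IH α) (fun y => kkH α x y))) := by
  refine ⟨fun h => ⟨fun y => convexOn_kkH_left h, fun x hx => ?_⟩,
    fun h => ⟨fun y => concaveOn_kkH_left h, fun x hx => ?_⟩⟩
  · simpa only [kkH_comm α x] using convexOn_kkH_left h hx
  · simpa only [kkH_comm α x] using concaveOn_kkH_left h hx
end
end

section
/- For α = 2 and α = 3, the function κ_α^H(x,y) = k_α^H( (k_α^H)^{-1}(x) ∗ (k_α^H)^{-1}(y) ) is affine (linear plus constant) in x on I_α^H for every fixed y ∈ I_α^H, and affine in y for every fixed x. -/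
open Real

noncomputable section

lemma kH_two (p : ℝ) : kH 2 p = p ^ 2 + (1 - p) ^ 2 := by
  unfold kH; rw [Real.rpow_two, Real.rpow_two]

lemma kH_three (p : ℝ) : kH 3 p = p ^ (3:ℕ) + (1 - p) ^ (3:ℕ) := by
  unfold kH
  rw [show (3:ℝ) = ((3:ℕ):ℝ) from by norm_num, Real.rpow_natCast, Real.rpow_natCast]

lemma kH_right_inv (α : ℝ) (hα : α = 2 ∨ α = 3) :
    ∀ x ∈ IH α, kH α (kHInv α x) = x := by
  intro x hx
  have hcont : ContinuousOn (kH α) (Set.uIcc 0 (1/2)) := by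
    rcases hα with h | h <;> subst h
    · rw [show kH 2 = fun p => p ^ 2 + (1 - p) ^ 2 from funext kH_two]; fun_prop
    · rw [show kH 3 = fun p => p ^ (3:ℕ) + (1 - p) ^ (3:ℕ) from funext kH_three]; fun_prop
  have hsub : IH α ⊆ kH α '' Set.uIcc 0 (1/2) := by
    have h0 : kH α 0 = 1 := by
      rcases hα with h | h <;> subst h <;> simp [kH_two, kH_three]
    have h1 : kH α (1/2) = deltaH α := by
      rcases hα with h | h <;> subst h <;>
        simp [kH_two, kH_three, deltaH] <;> norm_num [Real.rpow_neg, Real.rpow_natCast]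
    have := intermediate_value_uIcc (a := 0) (b := 1/2) hcont
    rw [h0, h1] at this
    exact fun z hz => this hz
  obtain ⟨p, hp, hpx⟩ := hsub hx
  rw [Set.uIcc_of_le (by norm_num : (0:ℝ) ≤ 1/2)] at hp
  exact Function.invFunOn_eq ⟨p, hp, hpx⟩

lemma kkH_two (x y : ℝ) (hx : x ∈ IH 2) (hy : y ∈ IH 2) :
    kkH 2 x y = (2*y - 1) * x + (1 - y) := by
  have hxe := kH_right_inv 2 (Or.inl rfl) x hx
  have hye := kH_right_inv 2 (Or.inl rfl) y hy
  set p := kHInv 2 x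
  set q := kHInv 2 y
  rw [kkH]
  rw [kH_two] at hxe hye ⊢
  rw [bconv]
  nlinarith [hxe, hye]

lemma kkH_three (x y : ℝ) (hx : x ∈ IH 3) (hy : y ∈ IH 3) :
    kkH 3 x y = ((4*y - 1)/3) * x + (1 - y)/3 := by
  have hxe := kH_right_inv 3 (Or.inr rfl) x hx
  have hye := kH_right_inv 3 (Or.inr rfl) y hy
  set p := kHInv 3 x
  set q := kHInv 3 y
  rw [kkH]
  rw [kH_three] at hxe hye ⊢
  rw [bconv]
  nlinarith [hxe, hye, sq_nonneg (1-2*p), sq_nonneg (1-2*q)]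

/-- For `α = 2` and `α = 3`, `κ_α^H` is affine in each argument
on `I_α^H`. -/
theorem stmt_9 (α : ℝ) (hα : α = 2 ∨ α = 3) :
    (∀ y ∈ IH α, ∃ a b : ℝ, ∀ x ∈ IH α, kkH α x y = a * x + b) ∧
    (∀ x ∈ IH α, ∃ a b : ℝ, ∀ y ∈ IH α, kkH α x y = a * y + b) := by
  rcases hα with h | h <;> subst h
  · exact ⟨fun y hy => ⟨2*y - 1, 1 - y, fun x hx => kkH_two x y hx hy⟩,
      fun x hx => ⟨2*x - 1, 1 - x, fun y hy => by rw [kkH_two x y hx hy]; ring⟩⟩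
  · exact ⟨fun y hy => ⟨(4*y - 1)/3, (1 - y)/3, fun x hx => kkH_three x y hx hy⟩,
      fun x hx => ⟨(4*x - 1)/3, (1 - x)/3, fun y hy => by rw [kkH_three x y hx hy]; ring⟩⟩
end
end

section
/- (Exact combining identities for H^H at α = 2, 3.) For (X_1,Y_1) independent of (X_2,Y_2) with X_i ∈ {0,1} and Y_i finite: H_2^H(X_1+X_2|Y_1Y_2) = h_2( h_2^{-1}(H_2^H(X_1|Y_1)) ∗ h_2^{-1}(H_2^H(X_2|Y_2)) ), and H_3^H(X_1+X_2|Y_1Y_2) = h_3( h_3^{-1}(H_3^H(X_1|Y_1)) ∗ h_3^{-1}(H_3^H(X_2|Y_2)) ). -/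
open Real

noncomputable section

/-! ### Auxiliary lemmas for `stmt_10` -/

private lemma div_split_aux (x y s t : ℝ) (hs : s = 0 → x = 0) (ht : t = 0 → y = 0) :
    (x * y) ^ 2 / (s * t) = x ^ 2 / s * (y ^ 2 / t) := by
  rcases eq_or_ne s 0 with h | h
  · simp [h, hs h]
  rcases eq_or_ne t 0 with h' | h'
  · simp [h', ht h']
  field_simp

private lemma marg_eq {Y : Type*} [Fintype Y] (p : Bool → Y → ℝ) (y : Y) :
    margY p y = p true y + p false y := by
  simp [margY, Fintype.sum_bool]

private lemma marg_sum_one {Y : Type*} [Fintype Y] (p : Bool → Y → ℝ) (hp : IsPmf p) :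
    ∑ y, margY p y = 1 := by
  simp only [margY]
  exact Finset.sum_comm.trans hp.2

private lemma A_bounds {Y : Type*} [Fintype Y] (p : Bool → Y → ℝ) (hp : IsPmf p) :
    0 ≤ ∑ y, (p true y - p false y) ^ 2 / margY p y ∧
      (∑ y, (p true y - p false y) ^ 2 / margY p y) ≤ 1 := by
  constructor
  · apply Finset.sum_nonneg
    intro y _
    apply div_nonneg (sq_nonneg _)
    rw [marg_eq]
    exact add_nonneg (hp.1 _ _) (hp.1 _ _)
  · rw [← marg_sum_one p hp]
    apply Finset.sum_le_sum
    intro y _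
    rw [marg_eq]
    rcases eq_or_lt_of_le (add_nonneg (hp.1 true y) (hp.1 false y)) with h | h
    · rw [← h, div_zero]
    · rw [div_le_iff₀ h]
      nlinarith [hp.1 true y, hp.1 false y]

private lemma sum_condH (α u v : ℝ)
    (hterm : ∀ a b : ℝ, 0 ≤ a → 0 ≤ b →
      (a + b) * ((a / (a + b)) ^ α + (b / (a + b)) ^ α)
        = u * (a + b) + v * ((a - b) ^ 2 / (a + b)))
    {Y : Type*} [Fintype Y] (p : Bool → Y → ℝ) (hp : IsPmf p) :
    ∑ y, ∑ x, margY p y * (p x y / margY p y) ^ α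
      = u + v * ∑ y, (p true y - p false y) ^ 2 / margY p y := by
  calc ∑ y, ∑ x, margY p y * (p x y / margY p y) ^ α
      = ∑ y, (u * margY p y + v * ((p true y - p false y) ^ 2 / margY p y)) := by
        refine Finset.sum_congr rfl fun y _ => ?_
        rw [Fintype.sum_bool, marg_eq p y]
        have h := hterm (p true y) (p false y) (hp.1 _ _) (hp.1 _ _)
        linear_combination h
    _ = u * ∑ y, margY p y + v * ∑ y, (p true y - p false y) ^ 2 / margY p y := by
        rw [Finset.sum_add_distrib, Finset.mul_sum, Finset.mul_sum]
    _ = u + v * ∑ y, (p true y - p false y) ^ 2 / margY p y := by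
        rw [marg_sum_one p hp, mul_one]

private lemma sum_condH_combine (α u v : ℝ)
    (hterm : ∀ a b : ℝ, 0 ≤ a → 0 ≤ b →
      (a + b) * ((a / (a + b)) ^ α + (b / (a + b)) ^ α)
        = u * (a + b) + v * ((a - b) ^ 2 / (a + b)))
    {Y1 Y2 : Type*} [Fintype Y1] [Fintype Y2]
    (p1 : Bool → Y1 → ℝ) (p2 : Bool → Y2 → ℝ) (hp1 : IsPmf p1) (hp2 : IsPmf p2) :
    ∑ y, ∑ x, margY (combine p1 p2) y * (combine p1 p2 x y / margY (combine p1 p2) y) ^ α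
      = u + v * ((∑ y, (p1 true y - p1 false y) ^ 2 / margY p1 y) *
          (∑ y, (p2 true y - p2 false y) ^ 2 / margY p2 y)) := by
  have hps : ∀ (f : Y1 → ℝ) (g : Y2 → ℝ),
      ∑ y : Y1 × Y2, f y.1 * g y.2 = (∑ y1, f y1) * (∑ y2, g y2) := by
    intro f g
    rw [Fintype.sum_prod_type, ← Finset.sum_mul_sum]
  calc ∑ y, ∑ x, margY (combine p1 p2) y * (combine p1 p2 x y / margY (combine p1 p2) y) ^ α
      = ∑ y : Y1 × Y2, (u * (margY p1 y.1 * margY p2 y.2)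
          + v * (((p1 true y.1 - p1 false y.1) ^ 2 / margY p1 y.1) *
              ((p2 true y.2 - p2 false y.2) ^ 2 / margY p2 y.2))) := by
        refine Finset.sum_congr rfl fun y _ => ?_
        obtain ⟨y1, y2⟩ := y
        have hqt : combine p1 p2 true (y1, y2)
            = p1 true y1 * p2 false y2 + p1 false y1 * p2 true y2 := by
          simp [combine, Fintype.sum_bool]
        have hqf : combine p1 p2 false (y1, y2)
            = p1 true y1 * p2 true y2 + p1 false y1 * p2 false y2 := by
          simp [combine, Fintype.sum_bool]
        have hM : margY (combine p1 p2) (y1, y2)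
            = (p1 true y1 * p2 false y2 + p1 false y1 * p2 true y2)
              + (p1 true y1 * p2 true y2 + p1 false y1 * p2 false y2) := by
          rw [marg_eq, hqt, hqf]
        rw [Fintype.sum_bool, hqt, hqf, hM, marg_eq p1 y1, marg_eq p2 y2]
        have h := hterm (p1 true y1 * p2 false y2 + p1 false y1 * p2 true y2)
          (p1 true y1 * p2 true y2 + p1 false y1 * p2 false y2)
          (add_nonneg (mul_nonneg (hp1.1 _ _) (hp2.1 _ _)) (mul_nonneg (hp1.1 _ _) (hp2.1 _ _)))
          (add_nonneg (mul_nonneg (hp1.1 _ _) (hp2.1 _ _)) (mul_nonneg (hp1.1 _ _) (hp2.1 _ _)))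
        have hsplit := div_split_aux (p1 true y1 - p1 false y1) (p2 true y2 - p2 false y2)
          (p1 true y1 + p1 false y1) (p2 true y2 + p2 false y2)
          (by intro h0; have := hp1.1 true y1; have := hp1.1 false y1; linarith)
          (by intro h0; have := hp2.1 true y2; have := hp2.1 false y2; linarith)
        linear_combination h + v * hsplit
    _ = u + v * ((∑ y, (p1 true y - p1 false y) ^ 2 / margY p1 y) *
          (∑ y, (p2 true y - p2 false y) ^ 2 / margY p2 y)) := by
        rw [Finset.sum_add_distrib, ← Finset.mul_sum, ← Finset.mul_sum,
          hps (fun y => margY p1 y) (fun y => margY p2 y),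
          hps (fun y => (p1 true y - p1 false y) ^ 2 / margY p1 y)
            (fun y => (p2 true y - p2 false y) ^ 2 / margY p2 y),
          marg_sum_one p1 hp1, marg_sum_one p2 hp2]
        ring

private lemma hayashi_main (α u v : ℝ) (hα : (1:ℝ) - α ≠ 0) (hu : 0 < u) (hv : 0 < v)
    (hterm : ∀ a b : ℝ, 0 ≤ a → 0 ≤ b →
      (a + b) * ((a / (a + b)) ^ α + (b / (a + b)) ^ α)
        = u * (a + b) + v * ((a - b) ^ 2 / (a + b)))
    (hkform : ∀ t : ℝ, ((1 - t) / 2) ^ α + (1 - (1 - t) / 2) ^ α = u + v * t ^ 2)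
    {Y1 Y2 : Type*} [Fintype Y1] [Fintype Y2]
    (p1 : Bool → Y1 → ℝ) (p2 : Bool → Y2 → ℝ) (hp1 : IsPmf p1) (hp2 : IsPmf p2) :
    condH α (combine p1 p2) =
      binH α (bconv (binHInv α (condH α p1)) (binHInv α (condH α p2))) := by
  obtain ⟨hA10, hA11⟩ := A_bounds p1 hp1
  obtain ⟨hA20, hA21⟩ := A_bounds p2 hp2
  have c1 : condH α p1 = (1/(1-α)) * Real.log (u + v * ∑ y, (p1 true y - p1 false y) ^ 2 / margY p1 y) := by
    simp only [condH]
    rw [sum_condH α u v hterm p1 hp1]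
  have c2 : condH α p2 = (1/(1-α)) * Real.log (u + v * ∑ y, (p2 true y - p2 false y) ^ 2 / margY p2 y) := by
    simp only [condH]
    rw [sum_condH α u v hterm p2 hp2]
  have hC : condH α (combine p1 p2)
      = (1/(1-α)) * Real.log (u + v * ((∑ y, (p1 true y - p1 false y) ^ 2 / margY p1 y) *
          (∑ y, (p2 true y - p2 false y) ^ 2 / margY p2 y))) := by
    simp only [condH]
    rw [sum_condH_combine α u v hterm p1 p2 hp1 hp2]
  set A1 := ∑ y, (p1 true y - p1 false y) ^ 2 / margY p1 y with hA1def
  set A2 := ∑ y, (p2 true y - p2 false y) ^ 2 / margY p2 y with hA2def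
  -- existence of preimages
  have keyPt : ∀ A : ℝ, 0 ≤ A → A ≤ 1 →
      ∃ q ∈ Set.Icc (0:ℝ) (1/2), binH α q = (1/(1-α)) * Real.log (u + v * A) := by
    intro A h0 h1c
    refine ⟨(1 - Real.sqrt A)/2, ⟨?_, ?_⟩, ?_⟩
    · have := Real.sqrt_le_one.mpr h1c
      linarith
    · have := Real.sqrt_nonneg A
      linarith
    · simp only [binH]
      rw [hkform (Real.sqrt A), Real.sq_sqrt h0]
  -- invert
  have hex1 : ∃ q ∈ Set.Icc (0:ℝ) (1/2), binH α q = condH α p1 := by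
    rw [c1]; exact keyPt A1 hA10 hA11
  have hex2 : ∃ q ∈ Set.Icc (0:ℝ) (1/2), binH α q = condH α p2 := by
    rw [c2]; exact keyPt A2 hA20 hA21
  set q1 := binHInv α (condH α p1) with hq1def
  set q2 := binHInv α (condH α p2) with hq2def
  have hinv1 : binH α q1 = condH α p1 := by
    rw [hq1def]; simp only [binHInv]; exact Function.invFunOn_eq hex1
  have hinv2 : binH α q2 = condH α p2 := by
    rw [hq2def]; simp only [binHInv]; exact Function.invFunOn_eq hex2
  -- extract squared biases
  have hbias : ∀ (q A : ℝ), 0 ≤ A → binH α q = (1/(1-α)) * Real.log (u + v * A) →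
      (1 - 2*q)^2 = A := by
    intro q A h0 hb
    simp only [binH] at hb
    have hk := hkform (1 - 2*q)
    rw [show (1 - (1 - 2*q))/2 = q from by ring] at hk
    rw [hk] at hb
    have hlog : Real.log (u + v * (1 - 2*q)^2) = Real.log (u + v * A) :=
      mul_left_cancel₀ (one_div_ne_zero hα) hb
    have hpos1 : 0 < u + v * (1 - 2*q)^2 :=
      add_pos_of_pos_of_nonneg hu (mul_nonneg hv.le (sq_nonneg _))
    have hpos2 : 0 < u + v * A := add_pos_of_pos_of_nonneg hu (mul_nonneg hv.le h0)
    have heq : u + v * (1 - 2*q)^2 = u + v * A := by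
      rw [← Real.exp_log hpos1, ← Real.exp_log hpos2, hlog]
    have : v * (1 - 2*q)^2 = v * A := by linarith
    exact mul_left_cancel₀ hv.ne' this
  have ht1 : (1 - 2*q1)^2 = A1 := hbias q1 A1 hA10 (hinv1.trans c1)
  have ht2 : (1 - 2*q2)^2 = A2 := hbias q2 A2 hA20 (hinv2.trans c2)
  -- conclude
  rw [hC]
  have hbc : bconv q1 q2 = (1 - (1 - 2*q1) * (1 - 2*q2))/2 := by
    simp only [bconv]; ring
  simp only [binH]
  rw [hbc, hkform ((1 - 2*q1) * (1 - 2*q2)), mul_pow, ht1, ht2]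

private lemma rpow_two_eq (x : ℝ) : x ^ (2:ℝ) = x ^ (2:ℕ) := by
  rw [show (2:ℝ) = ((2:ℕ):ℝ) by norm_num, Real.rpow_natCast]

private lemma rpow_three_eq (x : ℝ) : x ^ (3:ℝ) = x ^ (3:ℕ) := by
  rw [show (3:ℝ) = ((3:ℕ):ℝ) by norm_num, Real.rpow_natCast]

private lemma hterm2 : ∀ a b : ℝ, 0 ≤ a → 0 ≤ b →
    (a + b) * ((a / (a + b)) ^ (2:ℝ) + (b / (a + b)) ^ (2:ℝ))
      = (1/2) * (a + b) + (1/2) * ((a - b) ^ 2 / (a + b)) := by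
  intro a b ha hb
  rw [rpow_two_eq, rpow_two_eq]
  rcases eq_or_lt_of_le (add_nonneg ha hb) with h | h
  · rw [← h]
    simp
  · field_simp
    ring

private lemma hterm3 : ∀ a b : ℝ, 0 ≤ a → 0 ≤ b →
    (a + b) * ((a / (a + b)) ^ (3:ℝ) + (b / (a + b)) ^ (3:ℝ))
      = (1/4) * (a + b) + (3/4) * ((a - b) ^ 2 / (a + b)) := by
  intro a b ha hb
  rw [rpow_three_eq, rpow_three_eq]
  rcases eq_or_lt_of_le (add_nonneg ha hb) with h | h
  · rw [← h]
    simp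
  · field_simp
    ring

private lemma hkform2 : ∀ t : ℝ,
    ((1 - t) / 2) ^ (2:ℝ) + (1 - (1 - t) / 2) ^ (2:ℝ) = 1/2 + (1/2) * t ^ 2 := by
  intro t
  rw [rpow_two_eq, rpow_two_eq]
  ring

private lemma hkform3 : ∀ t : ℝ,
    ((1 - t) / 2) ^ (3:ℝ) + (1 - (1 - t) / 2) ^ (3:ℝ) = 1/4 + (3/4) * t ^ 2 := by
  intro t
  rw [rpow_three_eq, rpow_three_eq]
  ring

/-- Exact combining identities for the Hayashi conditional
Rényi entropy at `α = 2` and `α = 3`. -/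
theorem stmt_10 {Y1 Y2 : Type*} [Fintype Y1] [Fintype Y2]
    (p1 : Bool → Y1 → ℝ) (p2 : Bool → Y2 → ℝ)
    (hp1 : IsPmf p1) (hp2 : IsPmf p2) :
    condH 2 (combine p1 p2) =
      binH 2 (bconv (binHInv 2 (condH 2 p1)) (binHInv 2 (condH 2 p2))) ∧
    condH 3 (combine p1 p2) =
      binH 3 (bconv (binHInv 3 (condH 3 p1)) (binHInv 3 (condH 3 p2))) := by
  constructor
  · exact hayashi_main 2 (1/2) (1/2) (by norm_num) (by norm_num) (by norm_num)
      hterm2 hkform2 p1 p2 hp1 hp2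
  · exact hayashi_main 3 (1/4) (3/4) (by norm_num) (by norm_num) (by norm_num)
      hterm3 hkform3 p1 p2 hp1 hp2
end
end

section
/- (Additivity of Arimoto's conditional Rényi entropy.) Let (X_1,Y_1) and (X_2,Y_2) be pairs of finitely supported random variables with (X_1,Y_1) independent of (X_2,Y_2), and let α > 0, α ≠ 1. Then H_α^A(X_1X_2|Y_1Y_2) = H_α^A(X_1|Y_1) + H_α^A(X_2|Y_2), where the left-hand side is the Arimoto conditional Rényi entropy of the pair (X_1,X_2) given the pair (Y_1,Y_2). -/
open Real

noncomputable section

lemma aux_Spos (α : ℝ) (hα : 0 < α) {X Y : Type*} [Fintype X] [Fintype Y]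
    (p : X → Y → ℝ) (hp : IsPmf p) :
    0 < ∑ y, margY p y * (∑ x, (p x y / margY p y) ^ α) ^ (1/α) := by
  obtain ⟨hnn, hsum⟩ := hp
  have hm : ∀ y, 0 ≤ margY p y := fun y => Finset.sum_nonneg fun x _ => hnn x y
  have hmarg : ∑ y, margY p y = 1 := by
    rw [← hsum, Finset.sum_comm]; rfl
  have : ∃ y : Y, 0 < margY p y := by
    by_contra h
    push_neg at h
    have : ∀ y : Y, margY p y = 0 := fun y => le_antisymm (h y) (hm y)
    simp [this] at hmarg
  obtain ⟨y0, hy0⟩ := this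
  have hx : ∃ x : X, 0 < p x y0 := by
    by_contra h
    push_neg at h
    have : ∀ x : X, p x y0 = 0 := fun x => le_antisymm (h x) (hnn x y0)
    simp [margY, this] at hy0
  obtain ⟨x0, hx0⟩ := hx
  have hinner : 0 < ∑ x, (p x y0 / margY p y0) ^ α := by
    apply Finset.sum_pos' (fun x _ => rpow_nonneg (div_nonneg (hnn x y0) (hm y0)) α)
    exact ⟨x0, Finset.mem_univ x0, rpow_pos_of_pos (div_pos hx0 hy0) α⟩
  apply Finset.sum_pos' (fun y _ => mul_nonneg (hm y)
    (rpow_nonneg (Finset.sum_nonneg fun x _ => rpow_nonneg (div_nonneg (hnn x y) (hm y)) α) _))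
  exact ⟨y0, Finset.mem_univ y0, mul_pos hy0 (rpow_pos_of_pos hinner _)⟩

/-- Additivity of Arimoto's conditional Rényi entropy for
independent pairs. -/
theorem stmt_16 (α : ℝ) (hα : 0 < α) (hα1 : α ≠ 1)
    {X1 X2 Y1 Y2 : Type*} [Fintype X1] [Fintype X2] [Fintype Y1] [Fintype Y2]
    (p1 : X1 → Y1 → ℝ) (p2 : X2 → Y2 → ℝ)
    (hp1 : IsPmf p1) (hp2 : IsPmf p2) :
    condA α (fun (x : X1 × X2) (y : Y1 × Y2) => p1 x.1 y.1 * p2 x.2 y.2) =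
      condA α p1 + condA α p2 := by
  obtain ⟨h1nn, h1sum⟩ := hp1
  obtain ⟨h2nn, h2sum⟩ := hp2
  have hm1 : ∀ y, 0 ≤ margY p1 y := fun y => Finset.sum_nonneg fun x _ => h1nn x y
  have hm2 : ∀ y, 0 ≤ margY p2 y := fun y => Finset.sum_nonneg fun x _ => h2nn x y
  set q : X1 × X2 → Y1 × Y2 → ℝ := fun x y => p1 x.1 y.1 * p2 x.2 y.2 with hq
  have hmq : ∀ y : Y1 × Y2, margY q y = margY p1 y.1 * margY p2 y.2 := by
    intro y
    simp only [margY, hq, Fintype.sum_prod_type]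
    rw [Finset.sum_mul_sum]
  have hzero1 : ∀ y, margY p1 y = 0 → ∀ x, p1 x y = 0 := by
    intro y hy x
    have := (Finset.sum_eq_zero_iff_of_nonneg (fun x _ => h1nn x y)).mp hy
    exact this x (Finset.mem_univ x)
  have hzero2 : ∀ y, margY p2 y = 0 → ∀ x, p2 x y = 0 := by
    intro y hy x
    have := (Finset.sum_eq_zero_iff_of_nonneg (fun x _ => h2nn x y)).mp hy
    exact this x (Finset.mem_univ x)
  have hterm : ∀ (y1 : Y1) (y2 : Y2),
      margY q (y1, y2) * (∑ x : X1 × X2, (q x (y1, y2) / margY q (y1, y2)) ^ α) ^ (1/α) =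
      (margY p1 y1 * (∑ x, (p1 x y1 / margY p1 y1) ^ α) ^ (1/α)) *
      (margY p2 y2 * (∑ x, (p2 x y2 / margY p2 y2) ^ α) ^ (1/α)) := by
    intro y1 y2
    rcases eq_or_lt_of_le (hm1 y1) with h1 | h1
    · simp [hmq, ← h1]
    rcases eq_or_lt_of_le (hm2 y2) with h2 | h2
    · simp [hmq, ← h2]
    have hinner : ∑ x : X1 × X2, (q x (y1, y2) / margY q (y1, y2)) ^ α =
        (∑ x, (p1 x y1 / margY p1 y1) ^ α) * (∑ x, (p2 x y2 / margY p2 y2) ^ α) := by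
      rw [Fintype.sum_prod_type, Finset.sum_mul_sum]
      apply Finset.sum_congr rfl; intro x1 _
      apply Finset.sum_congr rfl; intro x2 _
      rw [← Real.mul_rpow (div_nonneg (h1nn x1 y1) (hm1 y1)) (div_nonneg (h2nn x2 y2) (hm2 y2))]
      congr 1
      rw [hmq]
      simp only [hq]
      field_simp
    rw [hinner, hmq,
      Real.mul_rpow (Finset.sum_nonneg fun x _ => rpow_nonneg (div_nonneg (h1nn x y1) (hm1 y1)) α)
        (Finset.sum_nonneg fun x _ => rpow_nonneg (div_nonneg (h2nn x y2) (hm2 y2)) α)]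
    ring
  have hS : (∑ y : Y1 × Y2, margY q y * (∑ x : X1 × X2, (q x y / margY q y) ^ α) ^ (1/α)) =
      (∑ y, margY p1 y * (∑ x, (p1 x y / margY p1 y) ^ α) ^ (1/α)) *
      (∑ y, margY p2 y * (∑ x, (p2 x y / margY p2 y) ^ α) ^ (1/α)) := by
    rw [Fintype.sum_prod_type, Finset.sum_mul_sum]
    exact Finset.sum_congr rfl fun y1 _ => Finset.sum_congr rfl fun y2 _ => hterm y1 y2
  have hS1 := aux_Spos α hα p1 ⟨h1nn, h1sum⟩
  have hS2 := aux_Spos α hα p2 ⟨h2nn, h2sum⟩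
  unfold condA
  rw [hS, Real.log_mul (ne_of_gt hS1) (ne_of_gt hS2), mul_add]
end
end
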